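/- For a single-system pure state |ψ⟩ and a complete projective measurement Π in orthonormal basis {|i⟩}, the trace distance ½‖|ψ⟩⟨ψ| − Π[|ψ⟩⟨ψ|]‖₁ equals the unique nonnegative c satisfying Σᵢ pᵢ/(c + pᵢ) = 1, where pᵢ = |⟨i|ψ⟩|². -/

import Mathlib

open Matrix Kronecker BigOperators
open scoped ComplexOrder

/-- Trace norm (Schatten 1-norm): `Tr √(XᴴX)`. -/
noncomputable def traceNorm {m n : Type*} [Fintype m] [Fintype n] [DecidableEq n]
    (X : Matrix m n ℂ) : ℝ :=
  (((Matrix.posSemidef_conjTranspose_mul_self X).1.eigenvectorUnitary.1 *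
    diagonal (((↑) : ℝ → ℂ) ∘ (√·) ∘ (Matrix.posSemidef_conjTranspose_mul_self X).1.eigenvalues) *
    (star (Matrix.posSemidef_conjTranspose_mul_self X).1.eigenvectorUnitary : Matrix n n ℂ)).trace).re


/-- Complete projective measurement in the orthonormal basis `e`:
`Π[τ] = Σᵢ |eᵢ⟩⟨eᵢ| τ |eᵢ⟩⟨eᵢ|`. -/
noncomputable def projMeas {d : ℕ} (e : Fin d → Fin d → ℂ)
    (τ : Matrix (Fin d) (Fin d) ℂ) : Matrix (Fin d) (Fin d) ℂ :=
  ∑ i, Matrix.vecMulVec (e i) (star (e i)) * τ * Matrix.vecMulVec (e i) (star (e i))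

/-!
In the basis `e`, `|ψ⟩⟨ψ| - Π[|ψ⟩⟨ψ|]` is the rank-one matrix `|a⟩⟨a|` (with `aᵢ = ⟨eᵢ|ψ⟩`) minus
the diagonal `diag(pᵢ)`, so it has at most one positive eigenvalue. The equation for `c` says that
`(c + Π[|ψ⟩⟨ψ|])⁻¹ ψ` is an eigenvector with eigenvalue `c`, and a weighted Cauchy–Schwarz
inequality shows the matrix is negative semidefinite on the orthogonal complement. Being
traceless, its negative part also has trace `c`, so its trace norm is `2c`.
-/

open scoped MatrixOrder

section TraceNorm

variable {n : Type*} [Fintype n]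

lemma Matrix.IsHermitian.star_vecMul_eq_zero {N : Matrix n n ℂ} (hN : N.IsHermitian) {v : n → ℂ}
    (hNv : N *ᵥ v = 0) : star v ᵥ* N = 0 := by
  rw [← hN.eq, vecMul_conjTranspose, star_star, hNv, star_zero]

lemma Matrix.PosSemidef.of_mulVec_eq_zero {N : Matrix n n ℂ} (hN : N.IsHermitian) {v : n → ℂ}
    (hNv : N *ᵥ v = 0) (h : ∀ y, star v ⬝ᵥ y = 0 → 0 ≤ star y ⬝ᵥ (N *ᵥ y)) : N.PosSemidef := by
  refine .of_dotProduct_mulVec_nonneg hN fun x => ?_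
  set α := (star v ⬝ᵥ x) / (star v ⬝ᵥ v)
  set y := x - α • v
  have hy : star v ⬝ᵥ y = 0 := by
    by_cases hv : star v ⬝ᵥ v = 0
    · rw [dotProduct_star_self_eq_zero.mp hv]; simp
    · simp [y, α, dotProduct_sub, dotProduct_smul, hv]
  have hxy : star x ⬝ᵥ (N *ᵥ x) = star y ⬝ᵥ (N *ᵥ y) := by
    have hx : x = y + α • v := by simp [y]
    rw [hx, mulVec_add, mulVec_smul, hNv, smul_zero, add_zero, star_add, add_dotProduct,
      star_smul, smul_dotProduct, dotProduct_mulVec (star v), hN.star_vecMul_eq_zero hNv,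
      zero_dotProduct, smul_zero, add_zero]
  exact hxy ▸ h y hy

variable [DecidableEq n]

lemma traceNorm_eq_re_trace_sqrt (M : Matrix n n ℂ) :
    traceNorm M = (CFC.sqrt (Mᴴ * M)).trace.re := by
  have hMM := posSemidef_conjTranspose_mul_self M
  rw [traceNorm, CFC.sqrt_eq_cfc, cfc_nnreal_eq_real _ (Mᴴ * M) hMM.nonneg, hMM.1.cfc_eq]
  simp only [IsHermitian.cfc, Unitary.conjStarAlgAut_apply]
  congr 5
  funext i
  simp [Real.coe_sqrt, Real.coe_toNNReal', max_eq_left (hMM.eigenvalues_nonneg i)]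

/-- `P + N` is the square root of `(P - N)ᴴ (P - N) = (P + N)²`. -/
lemma traceNorm_sub_of_mul_eq_zero {P N : Matrix n n ℂ} (hP : P.PosSemidef) (hN : N.PosSemidef)
    (hPN : P * N = 0) : traceNorm (P - N) = (P.trace + N.trace).re := by
  have hNP : N * P = 0 := by
    simpa [hP.isHermitian.eq, hN.isHermitian.eq] using congrArg conjTranspose hPN
  have hsq : (P - N)ᴴ * (P - N) = (P + N) * (P + N) := by
    rw [conjTranspose_sub, hP.isHermitian.eq, hN.isHermitian.eq]
    simp only [mul_add, add_mul, mul_sub, sub_mul, hPN, hNP]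
    abel
  rw [traceNorm_eq_re_trace_sqrt, hsq, CFC.sqrt_unique rfl (hP.add hN).nonneg, trace_add]

/-- The positive part of `M` is `c` times the projection onto `v`, and `‖M‖₁ = c + (c - tr M)`. -/
lemma traceNorm_eq_of_mulVec_eq_smul {M : Matrix n n ℂ} (hM : M.IsHermitian) {v : n → ℂ}
    (hv : v ≠ 0) {c : ℝ} (hc : 0 ≤ c) (hMv : M *ᵥ v = (c : ℂ) • v)
    (hneg : ∀ y, star v ⬝ᵥ y = 0 → star y ⬝ᵥ (M *ᵥ y) ≤ 0) :
    traceNorm M = 2 * c - M.trace.re := by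
  obtain ⟨s, hs, hvv : (s : ℂ) = _⟩ :=
    RCLike.pos_iff_exists_ofReal.mp (dotProduct_star_self_pos_iff.mpr hv)
  set P : Matrix n n ℂ := ((c / s : ℝ) : ℂ) • vecMulVec v (star v)
  have hP : P.PosSemidef :=
    (posSemidef_vecMulVec_self_star v).smul (Complex.zero_le_real.mpr (by positivity))
  have hPv : P *ᵥ v = (c : ℂ) • v := by
    rw [smul_mulVec, vecMulVec_mulVec, ← hvv, op_smul_eq_smul, smul_smul, ← Complex.ofReal_mul,
      div_mul_cancel₀ c hs.ne']
  have htrP : P.trace = c := by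
    rw [trace_smul, trace_vecMulVec, dotProduct_comm, ← hvv, smul_eq_mul, ← Complex.ofReal_mul,
      div_mul_cancel₀ c hs.ne']
  have hNv : (P - M) *ᵥ v = 0 := by rw [sub_mulVec, hPv, hMv, sub_self]
  have hN : (P - M).PosSemidef := by
    refine .of_mulVec_eq_zero (hP.isHermitian.sub hM) hNv fun y hy => ?_
    rw [sub_mulVec, dotProduct_sub, sub_nonneg, smul_mulVec, vecMulVec_mulVec, hy]
    simpa using hneg y hy
  have hPN : P * (P - M) = 0 := by
    rw [smul_mul_assoc, vecMulVec_mul, (hP.isHermitian.sub hM).star_vecMul_eq_zero hNv]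
    simp
  calc traceNorm M = traceNorm (P - (P - M)) := by rw [sub_sub_cancel]
    _ = 2 * c - M.trace.re := by
      rw [traceNorm_sub_of_mul_eq_zero hP hN hPN, trace_sub, htrP]
      simp only [Complex.add_re, Complex.sub_re, Complex.ofReal_re]
      ring

end TraceNorm

section Orthonormal

variable {n : Type*} [Fintype n] [DecidableEq n] {e : n → n → ℂ}

lemma dotProduct_sum_smul_of_orthonormal (he : ∀ i j, star (e i) ⬝ᵥ e j = if i = j then 1 else 0)
    (f : n → ℂ) (j : n) : star (e j) ⬝ᵥ ∑ i, f i • e i = f j := by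
  simp [dotProduct_sum, dotProduct_smul, he]

lemma sum_dotProduct_smul_of_orthonormal (he : ∀ i j, star (e i) ⬝ᵥ e j = if i = j then 1 else 0)
    (x : n → ℂ) : ∑ i, (star (e i) ⬝ᵥ x) • e i = x := by
  set U : Matrix n n ℂ := of fun i j => star (e i j)
  have hU : U * Uᴴ = 1 := by
    ext i j
    simpa [U, mul_apply, dotProduct, one_apply] using he i j
  have hx : Uᴴ *ᵥ (U *ᵥ x) = x := by rw [mulVec_mulVec, mul_eq_one_comm.mp hU, one_mulVec]
  conv_rhs => rw [← hx]
  ext k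
  simp [U, mulVec, dotProduct, Finset.sum_apply, mul_comm]

lemma star_dotProduct_eq_sum_of_orthonormal
    (he : ∀ i j, star (e i) ⬝ᵥ e j = if i = j then 1 else 0) (x y : n → ℂ) :
    star x ⬝ᵥ y = ∑ i, star (star (e i) ⬝ᵥ x) * (star (e i) ⬝ᵥ y) := by
  conv_lhs => rw [← sum_dotProduct_smul_of_orthonormal he y]
  simp only [dotProduct_sum, dotProduct_smul, smul_eq_mul, star_dotProduct x (e _), mul_comm]

end Orthonormal

lemma ofReal_add_norm_sq_mul_div {c : ℝ} (hc : 0 ≤ c) (a : ℂ) :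
    ((c + ‖a‖ ^ 2 : ℝ) : ℂ) * (a / ((c + ‖a‖ ^ 2 : ℝ) : ℂ)) = a := by
  rcases eq_or_ne a 0 with rfl | ha
  · simp
  · exact mul_div_cancel₀ a (Complex.ofReal_ne_zero.mpr (by positivity))

/-- Orthogonality to `(c + |a|²)⁻¹ a` turns `⟨a, y⟩` into `Σ qᵢ āᵢ yᵢ` with weights
`qᵢ = |aᵢ|² / (c + |aᵢ|²) ≤ 1` summing to `1`, and Cauchy–Schwarz applies. -/
lemma norm_sum_star_mul_sq_le {ι : Type*} [Fintype ι] {a y : ι → ℂ} {c : ℝ} (hc0 : 0 ≤ c)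
    (hc : ∑ i, ‖a i‖ ^ 2 / (c + ‖a i‖ ^ 2) = 1)
    (hy : ∑ i, star (a i / ((c + ‖a i‖ ^ 2 : ℝ) : ℂ)) * y i = 0) :
    ‖∑ i, star (a i) * y i‖ ^ 2 ≤ ∑ i, ‖a i‖ ^ 2 * ‖y i‖ ^ 2 := by
  set q : ι → ℝ := fun i => ‖a i‖ ^ 2 / (c + ‖a i‖ ^ 2)
  have hq0 : ∀ i, 0 ≤ q i := fun i => by positivity
  have hq1 : ∀ i, q i ≤ 1 := fun i => div_le_one_of_le₀ (by linarith) (by positivity)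
  have hsplit : ∀ i, star (a i) * y i =
      c * (star (a i / ((c + ‖a i‖ ^ 2 : ℝ) : ℂ)) * y i) + q i * (star (a i) * y i) := by
    intro i
    rcases eq_or_ne (a i) 0 with ha | ha
    · simp [ha]
    · have hpos : (c + ‖a i‖ ^ 2 : ℂ) ≠ 0 := by
        exact_mod_cast (by positivity : c + ‖a i‖ ^ 2 ≠ 0)
      simp only [q, star_div₀, Complex.star_def, Complex.conj_ofReal]
      push_cast
      field_simp
  have hsum : ∑ i, star (a i) * y i = ∑ i, (q i : ℂ) * (star (a i) * y i) := by
    rw [Finset.sum_congr rfl fun i _ => hsplit i, Finset.sum_add_distrib, ← Finset.mul_sum, hy,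
      mul_zero, zero_add]
  have hnorm : ‖∑ i, star (a i) * y i‖ ≤ ∑ i, q i * (‖a i‖ * ‖y i‖) := by
    rw [hsum]
    refine (norm_sum_le _ _).trans (Finset.sum_le_sum fun i _ => ?_)
    rw [norm_mul, norm_mul, norm_star, Complex.norm_real, Real.norm_of_nonneg (hq0 i)]
  have hcs : (∑ i, q i * (‖a i‖ * ‖y i‖)) ^ 2 ≤ (∑ i, q i) * ∑ i, q i * (‖a i‖ ^ 2 * ‖y i‖ ^ 2) :=
    Finset.sum_sq_le_sum_mul_sum_of_sq_le_mul _ (fun i _ => hq0 i)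
      (fun i _ => mul_nonneg (hq0 i) (by positivity)) (fun i _ => le_of_eq (by ring))
  calc ‖∑ i, star (a i) * y i‖ ^ 2 ≤ (∑ i, q i * (‖a i‖ * ‖y i‖)) ^ 2 :=
        pow_le_pow_left₀ (norm_nonneg _) hnorm 2
    _ ≤ ∑ i, q i * (‖a i‖ ^ 2 * ‖y i‖ ^ 2) := by simpa [q, hc] using hcs
    _ ≤ ∑ i, ‖a i‖ ^ 2 * ‖y i‖ ^ 2 :=
        Finset.sum_le_sum fun i _ => mul_le_of_le_one_left (by positivity) (hq1 i)

section Dephasing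

variable {n : Type*} [Fintype n]

noncomputable def dephasingDefect (e : n → n → ℂ) (ψ : n → ℂ) : Matrix n n ℂ :=
  vecMulVec ψ (star ψ) - ∑ i, ((‖star (e i) ⬝ᵥ ψ‖ ^ 2 : ℝ) : ℂ) • vecMulVec (e i) (star (e i))

/-- `(c + Π[|ψ⟩⟨ψ|])⁻¹ ψ`: the equation `Σ pᵢ / (c + pᵢ) = 1` says that it is an
eigenvector of `dephasingDefect e ψ` for the eigenvalue `c`. -/
noncomputable def resolventVector (e : n → n → ℂ) (ψ : n → ℂ) (c : ℝ) : n → ℂ :=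
  ∑ i, ((star (e i) ⬝ᵥ ψ) / ((c + ‖star (e i) ⬝ᵥ ψ‖ ^ 2 : ℝ) : ℂ)) • e i

lemma vecMulVec_sub_projMeas {d : ℕ} (e : Fin d → Fin d → ℂ) (ψ : Fin d → ℂ) :
    vecMulVec ψ (star ψ) - projMeas e (vecMulVec ψ (star ψ)) = dephasingDefect e ψ := by
  refine congrArg _ (Finset.sum_congr rfl fun i _ => ?_)
  rw [vecMulVec_mul_vecMulVec, vecMulVec_mul_vecMulVec, smul_dotProduct, star_dotProduct ψ,
    smul_eq_mul, RCLike.star_def, Complex.mul_conj', vecMulVec_smul]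
  norm_cast

lemma isHermitian_dephasingDefect (e : n → n → ℂ) (ψ : n → ℂ) :
    (dephasingDefect e ψ).IsHermitian :=
  (posSemidef_vecMulVec_self_star ψ).isHermitian.sub <| isSelfAdjoint_sum _ fun i _ =>
    (posSemidef_vecMulVec_self_star (e i)).isHermitian.smul (Complex.conj_ofReal _)

lemma dephasingDefect_mulVec (e : n → n → ℂ) (ψ x : n → ℂ) :
    dephasingDefect e ψ *ᵥ x = (star ψ ⬝ᵥ x) • ψ -
      ∑ i, (((‖star (e i) ⬝ᵥ ψ‖ ^ 2 : ℝ) : ℂ) * (star (e i) ⬝ᵥ x)) • e i := by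
  simp only [dephasingDefect, sub_mulVec, sum_mulVec, smul_mulVec, vecMulVec_mulVec,
    op_smul_eq_smul, smul_smul]

lemma star_dotProduct_dephasingDefect_mulVec (e : n → n → ℂ) (ψ x : n → ℂ) :
    star x ⬝ᵥ (dephasingDefect e ψ *ᵥ x) =
      ((‖star ψ ⬝ᵥ x‖ ^ 2 - ∑ i, ‖star (e i) ⬝ᵥ ψ‖ ^ 2 * ‖star (e i) ⬝ᵥ x‖ ^ 2 : ℝ) : ℂ) := by
  simp only [dephasingDefect_mulVec, dotProduct_sub, dotProduct_smul, dotProduct_sum, smul_eq_mul,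
    star_dotProduct x ψ, star_dotProduct x (e _), RCLike.star_def, mul_assoc, Complex.mul_conj']
  push_cast
  rfl

lemma star_dotProduct_resolventVector {e : n → n → ℂ} {ψ : n → ℂ} {c : ℝ}
    (hc : ∑ i, ‖star (e i) ⬝ᵥ ψ‖ ^ 2 / (c + ‖star (e i) ⬝ᵥ ψ‖ ^ 2) = 1) :
    star ψ ⬝ᵥ resolventVector e ψ c = 1 := by
  simp only [resolventVector, dotProduct_sum, dotProduct_smul, smul_eq_mul,
    star_dotProduct ψ (e _), RCLike.star_def, div_mul_eq_mul_div, Complex.mul_conj']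
  exact_mod_cast hc

variable [DecidableEq n] {e : n → n → ℂ}

lemma trace_dephasingDefect (he : ∀ i j, star (e i) ⬝ᵥ e j = if i = j then 1 else 0)
    (ψ : n → ℂ) : (dephasingDefect e ψ).trace = 0 := by
  rw [dephasingDefect, trace_sub, trace_sum, trace_vecMulVec, dotProduct_comm ψ,
    star_dotProduct_eq_sum_of_orthonormal he, sub_eq_zero]
  refine Finset.sum_congr rfl fun i _ => ?_
  rw [trace_smul, trace_vecMulVec, dotProduct_comm (e i), he, if_pos rfl, smul_eq_mul, mul_one,
    RCLike.star_def, Complex.conj_mul']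
  norm_cast

lemma dephasingDefect_mulVec_resolventVector {ψ : n → ℂ} {c : ℝ}
    (he : ∀ i j, star (e i) ⬝ᵥ e j = if i = j then 1 else 0) (hc0 : 0 ≤ c)
    (hc : ∑ i, ‖star (e i) ⬝ᵥ ψ‖ ^ 2 / (c + ‖star (e i) ⬝ᵥ ψ‖ ^ 2) = 1) :
    dephasingDefect e ψ *ᵥ resolventVector e ψ c = (c : ℂ) • resolventVector e ψ c := by
  rw [dephasingDefect_mulVec, star_dotProduct_resolventVector hc, one_smul, resolventVector]
  simp only [dotProduct_sum_smul_of_orthonormal he]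
  rw [sub_eq_iff_eq_add, Finset.smul_sum, ← Finset.sum_add_distrib]
  conv_lhs => rw [← sum_dotProduct_smul_of_orthonormal he ψ]
  refine Finset.sum_congr rfl fun i _ => ?_
  rw [smul_smul, ← add_smul]
  congr 1
  conv_lhs => rw [← ofReal_add_norm_sq_mul_div hc0 (star (e i) ⬝ᵥ ψ)]
  push_cast
  ring

lemma dephasingDefect_nonpos_of_orthogonal {ψ : n → ℂ} {c : ℝ}
    (he : ∀ i j, star (e i) ⬝ᵥ e j = if i = j then 1 else 0) (hc0 : 0 ≤ c)
    (hc : ∑ i, ‖star (e i) ⬝ᵥ ψ‖ ^ 2 / (c + ‖star (e i) ⬝ᵥ ψ‖ ^ 2) = 1) {y : n → ℂ}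
    (hy : star (resolventVector e ψ c) ⬝ᵥ y = 0) :
    star y ⬝ᵥ (dephasingDefect e ψ *ᵥ y) ≤ 0 := by
  rw [star_dotProduct_dephasingDefect_mulVec, ← Complex.ofReal_zero, Complex.real_le_real,
    sub_nonpos, star_dotProduct_eq_sum_of_orthonormal he]
  refine norm_sum_star_mul_sq_le hc0 hc ?_
  rw [star_dotProduct_eq_sum_of_orthonormal he, resolventVector] at hy
  simpa only [dotProduct_sum_smul_of_orthonormal he] using hy

end Dephasing

theorem disturbance_pure_single_general {d : ℕ}
    (ψ : Fin d → ℂ)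
    (e : Fin d → Fin d → ℂ)
    (he : ∀ i j, star (e i) ⬝ᵥ e j = if i = j then 1 else 0)
    (p : Fin d → ℝ) (hp : ∀ i, p i = ‖star (e i) ⬝ᵥ ψ‖^2)
    (c : ℝ) (hc0 : 0 ≤ c) (hc : ∑ i, p i / (c + p i) = 1) :
    (1 / 2) * traceNorm (Matrix.vecMulVec ψ (star ψ) - projMeas e (Matrix.vecMulVec ψ (star ψ)))
      = c := by
  obtain rfl : p = fun i => ‖star (e i) ⬝ᵥ ψ‖ ^ 2 := funext hp
  have hw : resolventVector e ψ c ≠ 0 := fun h => by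
    simpa [h] using star_dotProduct_resolventVector hc
  rw [vecMulVec_sub_projMeas, traceNorm_eq_of_mulVec_eq_smul (isHermitian_dephasingDefect e ψ) hw
    hc0 (dephasingDefect_mulVec_resolventVector he hc0 hc)
    (fun y hy => dephasingDefect_nonpos_of_orthogonal he hc0 hc hy), trace_dephasingDefect he]
  simp

/-- for a single-system pure state `|ψ⟩` and a complete projective measurement
in the orthonormal basis `{|eᵢ⟩}`, `½‖|ψ⟩⟨ψ| − Π[|ψ⟩⟨ψ|]‖₁` equals the unique nonnegative
`c` with `Σᵢ pᵢ/(c + pᵢ) = 1`, where `pᵢ = |⟨eᵢ|ψ⟩|²`. -/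
theorem disturbance_pure_single {d : ℕ}
    (ψ : Fin d → ℂ) (hψ : ∑ i, ‖ψ i‖^2 = 1)
    (e : Fin d → Fin d → ℂ)
    (he : ∀ i j, star (e i) ⬝ᵥ e j = if i = j then 1 else 0)
    (p : Fin d → ℝ) (hp : ∀ i, p i = ‖star (e i) ⬝ᵥ ψ‖^2)
    (c : ℝ) (hc0 : 0 ≤ c) (hc : ∑ i, p i / (c + p i) = 1) :
    (1 / 2) * traceNorm (Matrix.vecMulVec ψ (star ψ) - projMeas e (Matrix.vecMulVec ψ (star ψ)))
      = c :=
  disturbance_pure_single_general ψ e he p hp c hc0 hc
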